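/- Under the assumptions of the sampling theorem (‖w₁ − w₂‖ ≤ ε, all user representations f_i clipped to norm ≤ B), the softmax probabilities over any finite candidate subset S containing both v₁ and v₂ satisfy |log P(v₁) − log P(v₂)| ≤ 2εB/τ, where P(v) = softmax(max_i ⟨w_v, f_i⟩ / τ)_v. -/

import Mathlib

/-! The normalizer cancels in a difference of log-softmax values, leaving the score difference
divided by `τ`; a maximum of linear functionals of norm at most `B` is `B`-Lipschitz, so the score
difference is at most `ε * B`. -/

open Real

theorem Finset.abs_sup'_sub_sup'_le {ι : Type*} {s : Finset ι} (hs : s.Nonempty) {g h : ι → ℝ}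
    {c : ℝ} (hgh : ∀ i ∈ s, |g i - h i| ≤ c) : |s.sup' hs g - s.sup' hs h| ≤ c := by
  have sup'_le_sup'_add {g h : ι → ℝ} (hgh : ∀ i ∈ s, g i - h i ≤ c) :
      s.sup' hs g ≤ s.sup' hs h + c :=
    Finset.sup'_le hs g fun i hi => by linarith [hgh i hi, Finset.le_sup' h hi]
  rw [abs_sub_le_iff]
  constructor
  · linarith [sup'_le_sup'_add fun i hi => (abs_sub_le_iff.mp (hgh i hi)).1]
  · linarith [sup'_le_sup'_add fun i hi => (abs_sub_le_iff.mp (hgh i hi)).2]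

theorem abs_sup'_inner_sub_sup'_inner_le {E ι : Type*} [NormedAddCommGroup E]
    [InnerProductSpace ℝ E] {s : Finset ι} (hs : s.Nonempty) {f : ι → E} {B : ℝ}
    (hf : ∀ i ∈ s, ‖f i‖ ≤ B) (a b : E) :
    |s.sup' hs (fun i => inner ℝ a (f i)) - s.sup' hs (fun i => inner ℝ b (f i))|
      ≤ ‖a - b‖ * B :=
  Finset.abs_sup'_sub_sup'_le hs fun i hi => calc
    |inner ℝ a (f i) - inner ℝ b (f i)| = |inner ℝ (a - b) (f i)| := by rw [inner_sub_left]
    _ ≤ ‖a - b‖ * ‖f i‖ := abs_real_inner_le_norm _ _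
    _ ≤ ‖a - b‖ * B := mul_le_mul_of_nonneg_left (hf i hi) (norm_nonneg _)

theorem log_softmax_sub_log_softmax {S : Type*} [Fintype S] (x : S → ℝ) (a b : S) :
    log (exp (x a) / ∑ z, exp (x z)) - log (exp (x b) / ∑ z, exp (x z)) = x a - x b := by
  have hZ : ∑ z, exp (x z) ≠ 0 :=
    (Finset.sum_pos (fun z _ => exp_pos (x z)) ⟨a, Finset.mem_univ a⟩).ne'
  rw [log_div (exp_pos _).ne' hZ, log_div (exp_pos _).ne' hZ, log_exp, log_exp]
  ring

theorem sampling_log_prob_close {D M : ℕ} (hM : 0 < M) {S : Type*} [Fintype S]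
    (w : S → EuclideanSpace ℝ (Fin D)) (f : Fin M → EuclideanSpace ℝ (Fin D))
    (ε B τ : ℝ) (hτ : 0 < τ) (hf : ∀ i, ‖f i‖ ≤ B)
    (v₁ v₂ : S) (hw : ‖w v₁ - w v₂‖ ≤ ε) :
    |log (exp (Finset.univ.sup' (Finset.univ_nonempty_iff.mpr (Fin.pos_iff_nonempty.mp hM))
            (fun i => (inner ℝ (w v₁) (f i) : ℝ)) / τ) /
          ∑ z, exp (Finset.univ.sup' (Finset.univ_nonempty_iff.mpr (Fin.pos_iff_nonempty.mp hM))
            (fun i => (inner ℝ (w z) (f i) : ℝ)) / τ)) -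
     log (exp (Finset.univ.sup' (Finset.univ_nonempty_iff.mpr (Fin.pos_iff_nonempty.mp hM))
            (fun i => (inner ℝ (w v₂) (f i) : ℝ)) / τ) /
          ∑ z, exp (Finset.univ.sup' (Finset.univ_nonempty_iff.mpr (Fin.pos_iff_nonempty.mp hM))
            (fun i => (inner ℝ (w z) (f i) : ℝ)) / τ))| ≤ 2 * ε * B / τ := by
  set hne := Finset.univ_nonempty_iff.mpr (Fin.pos_iff_nonempty.mp hM)
  rw [log_softmax_sub_log_softmax
    (fun v => Finset.univ.sup' hne (fun i => inner ℝ (w v) (f i)) / τ) v₁ v₂,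
    ← sub_div, abs_div, abs_of_pos hτ]
  gcongr
  have hB : 0 ≤ B := (norm_nonneg _).trans (hf ⟨0, hM⟩)
  have hε : 0 ≤ ε := (norm_nonneg _).trans hw
  calc _ ≤ ‖w v₁ - w v₂‖ * B :=
        abs_sup'_inner_sub_sup'_inner_le _ (fun i _ => hf i) (w v₁) (w v₂)
    _ ≤ ε * B := by gcongr
    _ ≤ 2 * ε * B := by linarith [mul_nonneg hε hB]
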